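/- Let λ : [a,b] → ℝ be continuous. Then the limit as n → ∞ of the product ∏_{i=0}^{n-1} (1 - λ(a + i(b-a)/n) · (b-a)/n) equals exp(-∫_a^b λ(t) dt). -/

import Mathlib

/-!
Write `Δ = (b - a) / n` and `λᵢ = λ (a + i Δ)`. Once every factor is positive, the product is
`exp (∑ log (1 - λᵢ Δ))`. Since `λ` is bounded, `λᵢ Δ = O(1/n)`, so
`log (1 - λᵢ Δ) = -λᵢ Δ + O(1/n²)` and the `n` error terms add up to `O(1/n)`. What remains,
`∑ λᵢ Δ`, is a left Riemann sum of the uniformly continuous `λ`, which tends to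
`∫ λ`.
-/

open Filter Set Finset Real Topology MeasureTheory

lemma abs_log_one_add_sub_self_le {x : ℝ} (hx : |x| ≤ 1 / 2) :
    |log (1 + x) - x| ≤ 2 * x ^ 2 := by
  have h := abs_log_sub_add_sum_range_le (x := -x) (by rw [abs_neg]; linarith) 1
  norm_num [add_comm (-x), ← sub_eq_add_neg] at h
  calc |log (1 + x) - x| ≤ x ^ 2 / (1 - |x|) := h
    _ ≤ x ^ 2 / (1 / 2) := by gcongr; linarith
    _ = 2 * x ^ 2 := by ring

theorem tendsto_prod_one_add_of_tendsto_sum {x : ℕ → ℕ → ℝ} {s C : ℝ}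
    (hx : ∀ n : ℕ, ∀ i < n, |x n i| ≤ C / n)
    (hs : Tendsto (fun n => ∑ i ∈ range n, x n i) atTop (𝓝 s)) :
    Tendsto (fun n => ∏ i ∈ range n, (1 + x n i)) atTop (𝓝 (exp s)) := by
  have hsmall : ∀ᶠ n : ℕ in atTop, ∀ i < n, |x n i| ≤ 1 / 2 := by
    filter_upwards [(tendsto_const_div_atTop_nhds_zero_nat C).eventually
      (ge_mem_nhds one_half_pos)] with n hn i hi using (hx n i hi).trans hn
  have hlog : Tendsto (fun n => ∑ i ∈ range n, log (1 + x n i) - ∑ i ∈ range n, x n i)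
      atTop (𝓝 0) := by
    refine squeeze_zero_norm' ?_ (tendsto_const_div_atTop_nhds_zero_nat (2 * C ^ 2))
    filter_upwards [hsmall] with n hn
    calc ‖∑ i ∈ range n, log (1 + x n i) - ∑ i ∈ range n, x n i‖
        ≤ ∑ i ∈ range n, |log (1 + x n i) - x n i| := by
          rw [← sum_sub_distrib]; exact abs_sum_le_sum_abs _ _
      _ ≤ ∑ _i ∈ range n, 2 * (C / n) ^ 2 := by
          refine sum_le_sum fun i hi => ?_
          rw [Finset.mem_range] at hi
          refine (abs_log_one_add_sub_self_le (hn i hi)).trans ?_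
          rw [← sq_abs]
          gcongr
          exact hx n i hi
      _ = 2 * C ^ 2 / n := by
          rw [sum_const, card_range, nsmul_eq_mul]
          rcases n.eq_zero_or_pos with rfl | hn
          · simp
          · field_simp
  have hsum_log : Tendsto (fun n => ∑ i ∈ range n, log (1 + x n i)) atTop (𝓝 s) := by
    simpa using hlog.add hs
  refine ((continuous_exp.tendsto s).comp hsum_log).congr' ?_
  filter_upwards [hsmall] with n hn
  rw [Function.comp_apply, exp_sum]
  refine prod_congr rfl fun i hi => exp_log ?_
  linarith [neg_abs_le (x n i), hn i (Finset.mem_range.1 hi)]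

lemma abs_mul_sub_intervalIntegral_le {f : ℝ → ℝ} {s t ε : ℝ} (hst : s ≤ t)
    (hf : IntervalIntegrable f volume s t) (hε : ∀ x ∈ Icc s t, |f x - f s| ≤ ε) :
    |f s * (t - s) - ∫ x in s..t, f x| ≤ ε * (t - s) := by
  have hsub : f s * (t - s) - ∫ x in s..t, f x = ∫ x in s..t, (f s - f x) := by
    rw [intervalIntegral.integral_sub intervalIntegrable_const hf,
      intervalIntegral.integral_const, smul_eq_mul, mul_comm]
  have hnorm : ∀ x ∈ uIoc s t, ‖f s - f x‖ ≤ ε := fun x hx => by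
    rw [uIoc_of_le hst] at hx
    rw [Real.norm_eq_abs, abs_sub_comm]
    exact hε x (Ioc_subset_Icc_self hx)
  rw [hsub, ← abs_of_nonneg (sub_nonneg.2 hst)]
  exact intervalIntegral.norm_integral_le_of_norm_le_const hnorm

theorem abs_sum_mul_sub_intervalIntegral_le {f : ℝ → ℝ} {p : ℕ → ℝ} {n : ℕ} {ε : ℝ}
    (hp : Monotone p)
    (hf : ∀ i < n, IntervalIntegrable f volume (p i) (p (i + 1)))
    (hε : ∀ i < n, ∀ x ∈ Icc (p i) (p (i + 1)), |f x - f (p i)| ≤ ε) :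
    |∑ i ∈ range n, f (p i) * (p (i + 1) - p i) - ∫ x in p 0..p n, f x| ≤
      ε * (p n - p 0) := by
  rw [← intervalIntegral.sum_integral_adjacent_intervals hf, ← sum_sub_distrib,
    ← sum_range_sub, mul_sum]
  refine (abs_sum_le_sum_abs _ _).trans (sum_le_sum fun i hi => ?_)
  rw [Finset.mem_range] at hi
  exact abs_mul_sub_intervalIntegral_le (hp i.le_succ) (hf i hi) (hε i hi)

noncomputable def gridPoint (a b : ℝ) (n i : ℕ) : ℝ := a + i * (b - a) / n

section gridPoint

variable {a b : ℝ} {n : ℕ}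

@[simp] lemma gridPoint_zero : gridPoint a b n 0 = a := by simp [gridPoint]

lemma gridPoint_self (hn : n ≠ 0) : gridPoint a b n n = b := by
  simp [gridPoint, mul_div_cancel_left₀ _ (Nat.cast_ne_zero.2 hn : (n : ℝ) ≠ 0)]

lemma gridPoint_succ_sub (i : ℕ) : gridPoint a b n (i + 1) - gridPoint a b n i = (b - a) / n := by
  simp only [gridPoint]; push_cast; ring

lemma monotone_gridPoint (hab : a ≤ b) : Monotone (gridPoint a b n) := by
  intro i j hij
  simp only [gridPoint]
  gcongr

lemma gridPoint_mem_Icc (hab : a ≤ b) {i : ℕ} (hi : i ≤ n) :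
    gridPoint a b n i ∈ Icc a b := by
  rcases eq_or_ne n 0 with rfl | hn
  · simp_all
  · have hmono := monotone_gridPoint (n := n) hab
    exact ⟨by simpa using hmono i.zero_le, by simpa [gridPoint_self hn] using hmono hi⟩

end gridPoint

theorem ContinuousOn.tendsto_sum_mul_intervalIntegral {f : ℝ → ℝ} {a b : ℝ}
    (hf : ContinuousOn f (Icc a b)) (hab : a ≤ b) :
    Tendsto (fun n : ℕ => ∑ i ∈ range n, f (a + i * (b - a) / n) * ((b - a) / n)) atTop
      (𝓝 (∫ x in a..b, f x)) := by
  rw [Metric.tendsto_nhds]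
  intro ε hε
  set ε' := ε / (b - a + 1)
  obtain ⟨δ, hδ, hfδ⟩ := Metric.uniformContinuousOn_iff_le.1
    (isCompact_Icc.uniformContinuousOn_of_continuous hf) ε' (by positivity)
  filter_upwards [eventually_ne_atTop 0,
    (tendsto_const_div_atTop_nhds_zero_nat (b - a)).eventually (ge_mem_nhds hδ)] with n hn hmesh
  set p := gridPoint a b n
  have hp : Monotone p := monotone_gridPoint hab
  have hcell : ∀ i < n, Icc (p i) (p (i + 1)) ⊆ Icc a b := fun i hi =>
    Icc_subset_Icc (gridPoint_mem_Icc hab hi.le).1 (gridPoint_mem_Icc hab hi).2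
  have hosc : ∀ i < n, ∀ x ∈ Icc (p i) (p (i + 1)), |f x - f (p i)| ≤ ε' := by
    intro i hi x hx
    have hdist : dist x (p i) ≤ δ := by
      rw [Real.dist_eq, abs_of_nonneg (sub_nonneg.2 hx.1)]
      linarith [hx.2, gridPoint_succ_sub (a := a) (b := b) (n := n) i]
    exact hfδ x (hcell i hi hx) _ (hcell i hi ⟨le_rfl, hp i.le_succ⟩) hdist
  have hbound := abs_sum_mul_sub_intervalIntegral_le hp
    (fun i hi => (hf.mono (hcell i hi)).intervalIntegrable_of_Icc (hp i.le_succ)) hosc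
  simp only [p, gridPoint_succ_sub, gridPoint_zero, gridPoint_self hn] at hbound
  rw [Real.dist_eq]
  calc _ ≤ ε' * (b - a) := hbound
    _ < ε := by
      rw [div_mul_eq_mul_div, div_lt_iff₀ (by linarith)]
      nlinarith

theorem prod_no_transition_tendsto_exp (a b : ℝ) (hab : a ≤ b)
    (lam : ℝ → ℝ) (hlam : ContinuousOn lam (Icc a b)) :
    Tendsto
      (fun n : ℕ =>
        ∏ i ∈ Finset.range n, (1 - lam (a + i * (b - a) / n) * ((b - a) / n)))
      atTop (nhds (Real.exp (-∫ t in a..b, lam t))) := by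
  obtain ⟨M, hM⟩ := isCompact_Icc.exists_bound_of_continuousOn hlam
  have hstep : ∀ n : ℕ, ∀ i < n,
      |-(lam (a + i * (b - a) / n) * ((b - a) / n))| ≤ M * (b - a) / n := by
    intro n i hi
    have hmesh : 0 ≤ (b - a) / n := div_nonneg (sub_nonneg.2 hab) n.cast_nonneg
    rw [abs_neg, abs_mul, abs_of_nonneg hmesh, mul_div_assoc M]
    exact mul_le_mul_of_nonneg_right (hM _ (gridPoint_mem_Icc hab hi.le)) hmesh
  have hsum := (hlam.tendsto_sum_mul_intervalIntegral hab).neg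
  simp only [← sum_neg_distrib] at hsum
  simpa only [← sub_eq_add_neg] using tendsto_prod_one_add_of_tendsto_sum hstep hsum
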